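/- Let α ≥ 2. Every solution x(t) of the N-body problem with negative energy E(x(0), ẋ(0)) < 0 has a singularity in finite time: its maximal time of existence σ is finite. (Proof via the Lagrange–Jacobi identity: Ï ≤ 4E < 0 forces I(x(t)) to lie below a downward parabola, so I would become negative in finite time unless σ < ∞.) -/

import Mathlib

/- STATEMENT 1: for α ≥ 2, every solution of the N-body problem with negative energy
has a finite maximal time of existence (a singularity in finite time). -/

namespace NBodyPaper

open Real Filter

noncomputable section

abbrev E3 := EuclideanSpace ℝ (Fin 3)

variable {N : ℕ}

/-- The α-homogeneous potential `U(x) = -∑_{i<j} m_i m_j / |x_i - x_j|^α`. -/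
def pot (α : ℝ) (m : Fin N → ℝ) (q : Fin N → E3) : ℝ :=
  -∑ i : Fin N, ∑ j ∈ Finset.univ.filter (fun j => i < j), m i * m j / ‖q i - q j‖ ^ α

def kinetic (m : Fin N → ℝ) (v : Fin N → E3) : ℝ := (1 / 2) * ∑ i, m i * ‖v i‖ ^ 2

/-- Total energy `E(x, ẋ)`. -/
def energy (α : ℝ) (m : Fin N → ℝ) (q v : Fin N → E3) : ℝ := kinetic m v + pot α m q

/-- Moment of inertia `I(x) = ∑ m_i |x_i|²`. -/
def inertia (m : Fin N → ℝ) (q : Fin N → E3) : ℝ := ∑ i, m i * ‖q i‖ ^ 2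

/-- `ẍ_i = -∇_i U / m_i = -α ∑_{j≠i} m_j (x_i - x_j)/|x_i - x_j|^{α+2}`. -/
def accel (α : ℝ) (m : Fin N → ℝ) (q : Fin N → E3) (i : Fin N) : E3 :=
  (-α) • ∑ j ∈ Finset.univ.erase i, (m j / ‖q i - q j‖ ^ (α + 2)) • (q i - q j)

/-- Collision-free configuration. -/
def OffDiag (q : Fin N → E3) : Prop := ∀ i j, i ≠ j → q i ≠ q j

/-- The time interval `[0, σ)` for `σ ∈ (0, ∞]`. -/
def Dom (σ : EReal) : Set ℝ := {t : ℝ | 0 ≤ t ∧ (t : EReal) < σ}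

/-- `x` (with velocity `v`) solves the N-body equations on the set `s`. -/
def IsSolnOn (α : ℝ) (m : Fin N → ℝ) (x v : ℝ → Fin N → E3) (s : Set ℝ) : Prop :=
  ∀ t ∈ s, OffDiag (x t) ∧
    ∀ i, HasDerivAt (fun τ => x τ i) (v t i) t ∧ HasDerivAt (fun τ => v τ i) (accel α m (x t) i) t

/-- `x` is a solution on its maximal interval of existence `[0, σ)`:
it solves the equations there and no solution extends it to a longer interval. -/
def IsMaxSoln (α : ℝ) (m : Fin N → ℝ) (σ : EReal) (x v : ℝ → Fin N → E3) : Prop :=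
  0 < σ ∧ IsSolnOn α m x v (Dom σ) ∧
    ∀ (σ' : EReal) (x' v' : ℝ → Fin N → E3), IsSolnOn α m x' v' (Dom σ') →
      (∀ t ∈ Dom σ, x' t = x t ∧ v' t = v t) → σ' ≤ σ

/-! ### Auxiliary lemmas -/

/-- Derivative of `τ ↦ ‖y τ‖ ^ β` (real power) at a point where `y t ≠ 0`. -/
lemma myHasDerivAt_norm_rpow {y : ℝ → E3} {y' : E3} {t : ℝ} (β : ℝ)
    (hy : HasDerivAt y y' t) (h0 : y t ≠ 0) :
    HasDerivAt (fun τ => ‖y τ‖ ^ β) (β * ‖y t‖ ^ (β - 2) * (inner ℝ (y t) y' : ℝ)) t := by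
  have hn : ‖y t‖ ≠ 0 := norm_ne_zero_iff.mpr h0
  have hpos : (0:ℝ) < (inner ℝ (y t) (y t) : ℝ) := by
    rw [real_inner_self_eq_norm_sq]; positivity
  have hinner : HasDerivAt (fun τ => (inner ℝ (y τ) (y τ) : ℝ))
      ((inner ℝ (y t) y' : ℝ) + (inner ℝ y' (y t) : ℝ)) t := hy.inner ℝ hy
  have h2 : HasDerivAt (fun τ => (inner ℝ (y τ) (y τ) : ℝ)) (2 * (inner ℝ (y t) y' : ℝ)) t := by
    convert hinner using 1
    rw [real_inner_comm y' (y t)]; ring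
  have h3 := h2.rpow_const (p := β/2) (Or.inl (ne_of_gt hpos))
  have hfun : (fun τ => ‖y τ‖ ^ β) = fun τ => ((inner ℝ (y τ) (y τ) : ℝ)) ^ (β/2) := by
    funext τ
    rw [real_inner_self_eq_norm_sq, ← Real.rpow_natCast (‖y τ‖) 2, ← Real.rpow_mul (norm_nonneg _)]
    norm_num
    rw [show (2:ℝ) * (β / 2) = β by ring]
  rw [hfun]
  convert h3 using 1
  rw [real_inner_self_eq_norm_sq, ← Real.rpow_natCast (‖y t‖) 2, ← Real.rpow_mul (norm_nonneg _)]
  rw [show ((2:ℕ):ℝ) * (β / 2 - 1) = β - 2 by push_cast; ring]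
  ring

/-- Symmetrization of a double sum over off-diagonal pairs. -/
lemma sum_pairs (f : Fin N → Fin N → ℝ) :
    ∑ i, ∑ j ∈ Finset.univ.erase i, f i j
      = ∑ i, ∑ j ∈ Finset.univ.filter (fun j => i < j), (f i j + f j i) := by
  have hsplit : ∀ i : Fin N, (Finset.univ.erase i)
      = (Finset.univ.filter (fun j => i < j)) ∪ (Finset.univ.filter (fun j => j < i)) := by
    intro i; ext j
    simp only [Finset.mem_erase, Finset.mem_union, Finset.mem_filter, Finset.mem_univ,
      true_and, and_true]
    constructor
    · intro h; exact h.lt_or_gt.symm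
    · rintro (h | h) <;> [exact h.ne'; exact h.ne]
  have hdisj : ∀ i : Fin N, Disjoint (Finset.univ.filter (fun j => i < j))
      (Finset.univ.filter (fun j => j < i)) := by
    intro i
    rw [Finset.disjoint_left]
    intro j hj hj'
    simp only [Finset.mem_filter] at hj hj'
    exact absurd hj'.2 (lt_asymm hj.2)
  have hswap : ∑ i, ∑ j ∈ Finset.univ.filter (fun j => j < i), f i j
      = ∑ i, ∑ j ∈ Finset.univ.filter (fun j => i < j), f j i := by
    rw [Finset.sum_comm' (s' := fun j => Finset.univ.filter (fun i => j < i))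
      (t' := Finset.univ)]
    intro i j
    simp [and_comm]
  calc ∑ i, ∑ j ∈ Finset.univ.erase i, f i j
      = ∑ i, (∑ j ∈ Finset.univ.filter (fun j => i < j), f i j
          + ∑ j ∈ Finset.univ.filter (fun j => j < i), f i j) := by
        refine Finset.sum_congr rfl fun i _ => ?_
        rw [hsplit i, Finset.sum_union (hdisj i)]
    _ = ∑ i, ∑ j ∈ Finset.univ.filter (fun j => i < j), f i j
          + ∑ i, ∑ j ∈ Finset.univ.filter (fun j => i < j), f j i := by
        rw [Finset.sum_add_distrib, hswap]
    _ = _ := by rw [← Finset.sum_add_distrib]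
                exact Finset.sum_congr rfl fun i _ => (Finset.sum_add_distrib).symm

/-- Pairing identity for sums against the acceleration. -/
lemma inner_accel (α : ℝ) (m : Fin N → ℝ) (q : Fin N → E3) (w : Fin N → E3) :
    ∑ i, m i * (inner ℝ (w i) (accel α m q i) : ℝ)
      = (-α) * ∑ i, ∑ j ∈ Finset.univ.filter (fun j => i < j),
          m i * m j / ‖q i - q j‖ ^ (α + 2) * (inner ℝ (w i - w j) (q i - q j) : ℝ) := by
  have hterm : ∀ i, m i * (inner ℝ (w i) (accel α m q i) : ℝ)
      = ∑ j ∈ Finset.univ.erase i,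
          (-α) * (m i * m j / ‖q i - q j‖ ^ (α + 2) * (inner ℝ (w i) (q i - q j) : ℝ)) := by
    intro i
    rw [accel, inner_smul_right]
    rw [inner_sum]
    rw [Finset.mul_sum, Finset.mul_sum]
    refine Finset.sum_congr rfl fun j _ => ?_
    rw [inner_smul_right]
    ring
  calc ∑ i, m i * (inner ℝ (w i) (accel α m q i) : ℝ)
      = ∑ i, ∑ j ∈ Finset.univ.erase i,
          (-α) * (m i * m j / ‖q i - q j‖ ^ (α + 2) * (inner ℝ (w i) (q i - q j) : ℝ)) :=
        Finset.sum_congr rfl fun i _ => hterm i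
    _ = _ := by
        rw [sum_pairs, Finset.mul_sum]
        refine Finset.sum_congr rfl fun i _ => ?_
        rw [Finset.mul_sum]
        refine Finset.sum_congr rfl fun j hj => ?_
        have hneg : q j - q i = -(q i - q j) := by abel
        rw [hneg, norm_neg, inner_neg_right, inner_sub_left]
        ring

/-- `∑ mᵢ ⟪qᵢ, aᵢ⟫ = α U(q)` (homogeneity / Lagrange–Jacobi pairing). -/
lemma inner_accel_self (α : ℝ) (m : Fin N → ℝ) {q : Fin N → E3} (hq : OffDiag q) :
    ∑ i, m i * (inner ℝ (q i) (accel α m q i) : ℝ) = α * pot α m q := by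
  rw [inner_accel, pot, mul_neg, ← neg_mul]
  congr 1
  refine Finset.sum_congr rfl fun i _ => Finset.sum_congr rfl fun j hj => ?_
  simp only [Finset.mem_filter] at hj
  have hne : q i ≠ q j := hq i j (ne_of_lt hj.2)
  have hr : (0:ℝ) < ‖q i - q j‖ := by
    rw [norm_pos_iff]; exact sub_ne_zero.mpr hne
  have h1 : (inner ℝ (q i - q j) (q i - q j) : ℝ) = ‖q i - q j‖ ^ 2 :=
    real_inner_self_eq_norm_sq _
  rw [h1]
  have h2 : ‖q i - q j‖ ^ (α + 2) = ‖q i - q j‖ ^ α * ‖q i - q j‖ ^ 2 := by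
    rw [Real.rpow_add hr, ← Real.rpow_natCast (‖q i - q j‖) 2]
    norm_num
  rw [h2]
  have hα0 : ‖q i - q j‖ ^ α ≠ 0 := (Real.rpow_pos_of_pos hr α).ne'
  field_simp

/-- Rewriting of the potential with negative real powers. -/
lemma pot_eq (α : ℝ) (m : Fin N → ℝ) (q : Fin N → E3) :
    pot α m q = -∑ i, ∑ j ∈ Finset.univ.filter (fun j => i < j),
      m i * m j * ‖q i - q j‖ ^ (-α) := by
  rw [pot]
  congr 1
  refine Finset.sum_congr rfl fun i _ => Finset.sum_congr rfl fun j _ => ?_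
  rw [Real.rpow_neg (norm_nonneg _), div_eq_mul_inv]

/-- Derivative of the potential along a trajectory. -/
lemma hasDerivAt_pot (α : ℝ) (m : Fin N → ℝ) {x v : ℝ → Fin N → E3} {t : ℝ}
    (hq : OffDiag (x t)) (hd : ∀ i, HasDerivAt (fun τ => x τ i) (v t i) t) :
    HasDerivAt (fun τ => pot α m (x τ))
      (α * ∑ i, ∑ j ∈ Finset.univ.filter (fun j => i < j),
        m i * m j * ‖x t i - x t j‖ ^ (-α - 2)
          * (inner ℝ (x t i - x t j) (v t i - v t j) : ℝ)) t := by
  have hfun : (fun τ => pot α m (x τ))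
      = fun τ => -∑ i, ∑ j ∈ Finset.univ.filter (fun j => i < j),
          m i * m j * ‖x τ i - x τ j‖ ^ (-α) := by
    funext τ; exact pot_eq α m (x τ)
  rw [hfun]
  have hmain : HasDerivAt (fun τ => ∑ i, ∑ j ∈ Finset.univ.filter (fun j => i < j),
        m i * m j * ‖x τ i - x τ j‖ ^ (-α))
      (∑ i, ∑ j ∈ Finset.univ.filter (fun j => i < j),
        m i * m j * ((-α) * ‖x t i - x t j‖ ^ (-α - 2)
          * (inner ℝ (x t i - x t j) (v t i - v t j) : ℝ))) t := by
    refine HasDerivAt.fun_sum fun i _ => HasDerivAt.fun_sum fun j hj => ?_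
    simp only [Finset.mem_filter] at hj
    have hne : x t i - x t j ≠ 0 := sub_ne_zero.mpr (hq i j (ne_of_lt hj.2))
    have hder : HasDerivAt (fun τ => x τ i - x τ j) (v t i - v t j) t := (hd i).sub (hd j)
    exact (myHasDerivAt_norm_rpow (-α) hder hne).const_mul (m i * m j)
  have := hmain.neg
  refine this.congr_deriv ?_
  rw [← Finset.sum_neg_distrib, Finset.mul_sum]
  refine Finset.sum_congr rfl fun i _ => ?_
  rw [← Finset.sum_neg_distrib, Finset.mul_sum]
  refine Finset.sum_congr rfl fun j _ => ?_
  ring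

/-- Derivative of the kinetic energy along a trajectory. -/
lemma hasDerivAt_kinetic (m : Fin N → ℝ) {v : ℝ → Fin N → E3} {a : Fin N → E3} {t : ℝ}
    (hd : ∀ i, HasDerivAt (fun τ => v τ i) (a i) t) :
    HasDerivAt (fun τ => kinetic m (v τ)) (∑ i, m i * (inner ℝ (v t i) (a i) : ℝ)) t := by
  have hfun : (fun τ => kinetic m (v τ))
      = fun τ => (1/2) * ∑ i, m i * (inner ℝ (v τ i) (v τ i) : ℝ) := by
    funext τ
    rw [kinetic]
    congr 1
    exact Finset.sum_congr rfl fun i _ => by rw [real_inner_self_eq_norm_sq]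
  rw [hfun]
  have hmain : HasDerivAt (fun τ => ∑ i, m i * (inner ℝ (v τ i) (v τ i) : ℝ))
      (∑ i, m i * ((inner ℝ (v t i) (a i) : ℝ) + (inner ℝ (a i) (v t i) : ℝ))) t :=
    HasDerivAt.fun_sum fun i _ => ((hd i).inner ℝ (hd i)).const_mul (m i)
  have := hmain.const_mul ((1:ℝ)/2)
  refine this.congr_deriv ?_
  rw [Finset.mul_sum]
  refine Finset.sum_congr rfl fun i _ => ?_
  rw [real_inner_comm (a i) (v t i)]
  ring

/-- **Negative energy forces a singularity** for `α ≥ 2`: the maximal time `σ` is finite. -/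
theorem negative_energy_singularity {N : ℕ} (α : ℝ) (hα : 2 ≤ α)
    (m : Fin N → ℝ) (hm : ∀ i, 0 < m i)
    (σ : EReal) (x v : ℝ → Fin N → E3) (hx : IsMaxSoln α m σ x v)
    (hE : energy α m (x 0) (v 0) < 0) :
    σ < ⊤ := by
  by_contra htop
  have hσtop : σ = ⊤ := top_le_iff.mp (not_lt.mp htop)
  obtain ⟨-, hsol, -⟩ := hx
  rw [hσtop] at hsol
  have hdom : Dom (⊤ : EReal) = Set.Ici (0:ℝ) := by
    ext t
    simp [Dom, Set.mem_Ici]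
  rw [hdom] at hsol
  set E0 := energy α m (x 0) (v 0) with hE0def
  -- the first derivative of the moment of inertia
  set J : ℝ → ℝ := fun t => 2 * ∑ i, m i * (inner ℝ (x t i) (v t i) : ℝ) with hJdef
  -- derivative of inertia is J
  have hIder : ∀ t ∈ Set.Ici (0:ℝ), HasDerivAt (fun τ => inertia m (x τ)) (J t) t := by
    intro t ht
    obtain ⟨hq, hders⟩ := hsol t ht
    have hfun : (fun τ => inertia m (x τ))
        = fun τ => ∑ i, m i * (inner ℝ (x τ i) (x τ i) : ℝ) := by
      funext τ
      rw [inertia]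
      exact Finset.sum_congr rfl fun i _ => by rw [real_inner_self_eq_norm_sq]
    rw [hfun]
    have hmain : HasDerivAt (fun τ => ∑ i, m i * (inner ℝ (x τ i) (x τ i) : ℝ))
        (∑ i, m i * ((inner ℝ (x t i) (v t i) : ℝ) + (inner ℝ (v t i) (x t i) : ℝ))) t :=
      HasDerivAt.fun_sum fun i _ => (((hders i).1).inner ℝ ((hders i).1)).const_mul (m i)
    convert hmain using 1
    show 2 * ∑ i, m i * (inner ℝ (x t i) (v t i) : ℝ) = _
    rw [Finset.mul_sum]
    refine Finset.sum_congr rfl fun i _ => ?_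
    rw [real_inner_comm (v t i) (x t i)]
    ring
  -- derivative of J
  have hJder : ∀ t ∈ Set.Ici (0:ℝ),
      HasDerivAt J (4 * kinetic m (v t) + 2 * α * pot α m (x t)) t := by
    intro t ht
    obtain ⟨hq, hders⟩ := hsol t ht
    have hmain : HasDerivAt (fun τ => ∑ i, m i * (inner ℝ (x τ i) (v τ i) : ℝ))
        (∑ i, m i * ((inner ℝ (x t i) (accel α m (x t) i) : ℝ) + (inner ℝ (v t i) (v t i) : ℝ))) t :=
      HasDerivAt.fun_sum fun i _ => (((hders i).1).inner ℝ ((hders i).2)).const_mul (m i)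
    have h2 := hmain.const_mul (2:ℝ)
    have hsum : ∑ i, m i * ((inner ℝ (x t i) (accel α m (x t) i) : ℝ) + (inner ℝ (v t i) (v t i) : ℝ))
        = α * pot α m (x t) + 2 * kinetic m (v t) := by
      have hsplit : ∑ i, m i * ((inner ℝ (x t i) (accel α m (x t) i) : ℝ)
            + (inner ℝ (v t i) (v t i) : ℝ))
          = (∑ i, m i * (inner ℝ (x t i) (accel α m (x t) i) : ℝ))
            + ∑ i, m i * (inner ℝ (v t i) (v t i) : ℝ) := by
        rw [← Finset.sum_add_distrib]
        exact Finset.sum_congr rfl fun i _ => by ring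
      rw [hsplit, inner_accel_self α m hq]
      congr 1
      rw [kinetic]
      rw [show (2:ℝ) * ((1/2) * ∑ i, m i * ‖v t i‖ ^ 2) = ∑ i, m i * ‖v t i‖ ^ 2 by ring]
      exact Finset.sum_congr rfl fun i _ => by rw [real_inner_self_eq_norm_sq]
    have : HasDerivAt J (2 * (α * pot α m (x t) + 2 * kinetic m (v t))) t := by
      rw [hJdef]; rw [← hsum]; exact h2
    convert this using 1
    ring
  -- energy is conserved
  have hEder : ∀ t ∈ Set.Ici (0:ℝ),
      HasDerivAt (fun τ => energy α m (x τ) (v τ)) 0 t := by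
    intro t ht
    obtain ⟨hq, hders⟩ := hsol t ht
    have hK := hasDerivAt_kinetic m (a := fun i => accel α m (x t) i)
      (fun i => (hders i).2)
    have hU := hasDerivAt_pot α m hq (fun i => (hders i).1)
    have hKU := hK.add hU
    have hfun : (fun τ => energy α m (x τ) (v τ))
        = fun τ => kinetic m (v τ) + pot α m (x τ) := by
      funext τ; rw [energy]
    rw [hfun]
    refine hKU.congr_deriv ?_
    rw [inner_accel]
    rw [Finset.mul_sum, Finset.mul_sum, ← Finset.sum_add_distrib]
    rw [eq_comm, Finset.sum_eq_zero]
    intro i _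
    rw [Finset.mul_sum, Finset.mul_sum, ← Finset.sum_add_distrib]
    rw [Finset.sum_eq_zero]
    intro j _
    have h1 : ‖x t i - x t j‖ ^ (-α - 2) = (‖x t i - x t j‖ ^ (α + 2))⁻¹ := by
      rw [show -α - 2 = -(α + 2) by ring, Real.rpow_neg (norm_nonneg _)]
    have h2 : (inner ℝ (v t i - v t j) (x t i - x t j) : ℝ)
        = (inner ℝ (x t i - x t j) (v t i - v t j) : ℝ) := real_inner_comm _ _
    rw [h1, h2, div_eq_mul_inv]
    ring
  have hEconst : ∀ t ∈ Set.Ici (0:ℝ), energy α m (x t) (v t) = E0 := by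
    intro t ht
    have hcont : ContinuousOn (fun τ => energy α m (x τ) (v τ)) (Set.Icc 0 t) :=
      fun τ hτ => ((hEder τ hτ.1).continuousAt).continuousWithinAt
    have hder : ∀ τ ∈ Set.Ico (0:ℝ) t,
        HasDerivWithinAt (fun τ => energy α m (x τ) (v τ)) 0 (Set.Ici τ) τ :=
      fun τ hτ => (hEder τ hτ.1).hasDerivWithinAt
    exact constant_of_has_deriv_right_zero hcont hder t ⟨ht, le_refl t⟩
  -- the potential is nonpositive
  have hpotle : ∀ t, pot α m (x t) ≤ 0 := by
    intro t
    rw [pot, neg_nonpos]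
    refine Finset.sum_nonneg fun i _ => Finset.sum_nonneg fun j _ => ?_
    have := (hm i).le
    have := (hm j).le
    have : (0:ℝ) ≤ ‖x t i - x t j‖ ^ α := Real.rpow_nonneg (norm_nonneg _) α
    positivity
  -- the second derivative of I is bounded by 4 E0
  have hJ'le : ∀ t ∈ Set.Ici (0:ℝ),
      4 * kinetic m (v t) + 2 * α * pot α m (x t) ≤ 4 * E0 := by
    intro t ht
    have h1 := hEconst t ht
    rw [energy] at h1
    have h2 := hpotle t
    nlinarith [h2, hα]
  have hE0neg : E0 < 0 := hE
  -- J t ≤ J 0 + 4 E0 t on [0, ∞)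
  have hJle : ∀ t ∈ Set.Ici (0:ℝ), J t ≤ J 0 + 4 * E0 * t := by
    have hg : ∀ t ∈ Set.Ici (0:ℝ), HasDerivAt (fun τ => J τ - 4 * E0 * τ)
        (4 * kinetic m (v t) + 2 * α * pot α m (x t) - 4 * E0) t := by
      intro t ht
      have h1 : HasDerivAt (fun τ : ℝ => 4 * E0 * τ) (4 * E0) t := by
        simpa using (hasDerivAt_id t).const_mul (4 * E0)
      exact (hJder t ht).sub h1
    have hanti : AntitoneOn (fun τ => J τ - 4 * E0 * τ) (Set.Ici 0) := by
      apply antitoneOn_of_deriv_nonpos (convex_Ici 0)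
      · exact fun τ hτ => ((hg τ hτ).continuousAt).continuousWithinAt
      · intro τ hτ
        rw [interior_Ici] at hτ
        exact ((hg τ (Set.mem_Ici.mpr (Set.mem_Ioi.mp hτ).le)).differentiableAt).differentiableWithinAt
      · intro τ hτ
        rw [interior_Ici] at hτ
        rw [(hg τ (Set.mem_Ici.mpr (Set.mem_Ioi.mp hτ).le)).deriv]
        have := hJ'le τ (Set.mem_Ici.mpr (Set.mem_Ioi.mp hτ).le)
        linarith
    intro t ht
    have := hanti (Set.self_mem_Ici) ht ht
    simp only at this
    linarith [this]
  -- I t ≤ I 0 + J 0 t + 2 E0 t² on [0, ∞)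
  have hIle : ∀ t ∈ Set.Ici (0:ℝ),
      inertia m (x t) ≤ inertia m (x 0) + J 0 * t + 2 * E0 * t ^ 2 := by
    have hg : ∀ t ∈ Set.Ici (0:ℝ),
        HasDerivAt (fun τ => inertia m (x τ) - (J 0 * τ + 2 * E0 * τ ^ 2))
          (J t - (J 0 + 4 * E0 * t)) t := by
      intro t ht
      have h1 : HasDerivAt (fun τ : ℝ => J 0 * τ + 2 * E0 * τ ^ 2) (J 0 + 4 * E0 * t) t := by
        have ha : HasDerivAt (fun τ : ℝ => J 0 * τ) (J 0) t := by
          simpa using (hasDerivAt_id t).const_mul (J 0)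
        have hb : HasDerivAt (fun τ : ℝ => 2 * E0 * τ ^ 2) (4 * E0 * t) t := by
          have := (hasDerivAt_pow 2 t).const_mul (2 * E0)
          refine this.congr_deriv ?_
          simp
          ring
        exact ha.add hb
      exact (hIder t ht).sub h1
    have hanti : AntitoneOn (fun τ => inertia m (x τ) - (J 0 * τ + 2 * E0 * τ ^ 2))
        (Set.Ici 0) := by
      apply antitoneOn_of_deriv_nonpos (convex_Ici 0)
      · exact fun τ hτ => ((hg τ hτ).continuousAt).continuousWithinAt
      · intro τ hτ
        rw [interior_Ici] at hτ
        exact ((hg τ (Set.mem_Ici.mpr (Set.mem_Ioi.mp hτ).le)).differentiableAt).differentiableWithinAt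
      · intro τ hτ
        rw [interior_Ici] at hτ
        rw [(hg τ (Set.mem_Ici.mpr (Set.mem_Ioi.mp hτ).le)).deriv]
        have := hJle τ (Set.mem_Ici.mpr (Set.mem_Ioi.mp hτ).le)
        linarith
    intro t ht
    have := hanti (Set.self_mem_Ici) ht ht
    simp only at this
    linarith [this]
  -- inertia is nonnegative
  have hInonneg : ∀ t, 0 ≤ inertia m (x t) := by
    intro t
    rw [inertia]
    refine Finset.sum_nonneg fun i _ => ?_
    have := (hm i).le
    positivity
  -- derive the contradiction at a large time
  set I0 := inertia m (x 0) with hI0def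
  set J0 := J 0 with hJ0def
  have hI0 : 0 ≤ I0 := hInonneg 0
  set T : ℝ := max 1 ((I0 + |J0| + 1) / (-(2 * E0))) with hTdef
  have hT1 : (1:ℝ) ≤ T := le_max_left _ _
  have hT0 : (0:ℝ) ≤ T := le_trans zero_le_one hT1
  have hT2 : (I0 + |J0| + 1) / (-(2 * E0)) ≤ T := le_max_right _ _
  have hdenpos : (0:ℝ) < -(2 * E0) := by linarith
  have hT3 : I0 + |J0| + 1 ≤ T * (-(2 * E0)) := by
    rwa [div_le_iff₀ hdenpos] at hT2
  have hb := hIle T hT0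
  have hnn := hInonneg T
  have hJabs : J0 ≤ |J0| := le_abs_self _
  have habs0 : (0:ℝ) ≤ |J0| := abs_nonneg _
  nlinarith [mul_le_mul_of_nonneg_right hT3 hT0, sq_nonneg T,
    mul_le_mul_of_nonneg_right hJabs hT0, mul_le_mul_of_nonneg_left hT1 (by linarith : (0:ℝ) ≤ I0 + 1)]

end
end NBodyPaper
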